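/- The functions C1 = (γ, γ) and C2 = (γ, B M) are Casimir functions of the bracket {·,·}_b: they Poisson-commute with all coordinate functions γ_i and M_i. -/

import Mathlib

open scoped BigOperators
noncomputable section

/-- ℝ³ as functions `Fin 3 → ℝ`. -/
abbrev R3 := Fin 3 → ℝ

/-- Phase space: pairs `(γ, M)`. -/
abbrev St := R3 × R3

/-- Standard scalar product in ℝ³. -/
def dot3 (x y : R3) : ℝ := ∑ i, x i * y i

/-- Cross product in ℝ³. -/
def cross (x y : R3) : R3 :=
  ![x 1 * y 2 - x 2 * y 1, x 2 * y 0 - x 0 * y 2, x 0 * y 1 - x 1 * y 0]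

/-- Levi-Civita symbol. -/
def eps (i j k : Fin 3) : ℝ :=
  ((((j : ℤ) - (i : ℤ)) * ((k : ℤ) - (i : ℤ)) * ((k : ℤ) - (j : ℤ))) / 2 : ℤ)

/-- Application of the diagonal matrix A = diag a. -/
def Aapp (a : R3) (v : R3) : R3 := fun i => a i * v i

/-- Angular velocity ω expressed through M. -/
def omg (a : R3) (d : ℝ) (x : St) : R3 := fun i =>
  a i * x.2 i + d * dot3 x.1 (Aapp a x.2) / (1 - d * dot3 x.1 (Aapp a x.1)) * (a i * x.1 i)

/-- g(γ) = sqrt(1 - d (γ, Aγ)). -/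
def gfun (a : R3) (d : ℝ) (γ : R3) : ℝ := Real.sqrt (1 - d * dot3 γ (Aapp a γ))

/-- Partial derivative in the γ (inl) or M (inr) direction. -/
def pd : (Fin 3 ⊕ Fin 3) → (St → ℝ) → St → ℝ
  | .inl i, F, x => fderiv ℝ F x (Pi.single i 1, 0)
  | .inr i, F, x => fderiv ℝ F x (0, Pi.single i 1)

/-- Bracket of two functions determined by a structure matrix π. -/
def pb (π : St → (Fin 3 ⊕ Fin 3) → (Fin 3 ⊕ Fin 3) → ℝ) (F G : St → ℝ) (x : St) : ℝ :=
  ∑ u, ∑ v, π x u v * pd u F x * pd v G x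

/-- Structure matrix of the bracket {·,·}_g. -/
def piG (a : R3) (d : ℝ) (x : St) : (Fin 3 ⊕ Fin 3) → (Fin 3 ⊕ Fin 3) → ℝ
  | .inl _, .inl _ => 0
  | .inl i, .inr j => ∑ k, eps i j k * gfun a d x.1 * x.1 k
  | .inr i, .inl j => ∑ k, eps i j k * gfun a d x.1 * x.1 k
  | .inr i, .inr j => ∑ k, eps i j k *
      (gfun a d x.1 * x.2 k - d * dot3 x.2 (Aapp a x.1) * x.1 k / gfun a d x.1)

/-- Coordinate functions on the phase space. -/
def coordFn : (Fin 3 ⊕ Fin 3) → St → ℝ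
  | .inl i => fun x => x.1 i
  | .inr i => fun x => x.2 i

/-- Entries of B = tr(A⁻¹)E - 2A⁻¹ (the case κ = -1): b_i = tr A⁻¹ - 2/a_i. -/
def bb (a : R3) (i : Fin 3) : ℝ := (∑ m, (a m)⁻¹) - 2 * (a i)⁻¹

/-- α_k = C₂ + b_k (γ, M) with C₂ = (γ, B M). -/
def alf (a : R3) (x : St) (k : Fin 3) : ℝ :=
  (∑ m, x.1 m * bb a m * x.2 m) + bb a k * dot3 x.1 x.2

/-- The table of brackets {M_i, γ_j}_b. -/
def pmg (a : R3) (d : ℝ) (γ : R3) : Fin 3 → Fin 3 → ℝ :=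
  let g := gfun a d γ
  let b := bb a
  ![![ g * (b 1 - b 2) * γ 0 * γ 1 * γ 2,
       g * γ 2 * (b 2 * (γ 0 ^ 2 + γ 2 ^ 2) + b 1 * γ 1 ^ 2 - b 1 * b 2 / (2 * d)),
       -(g * γ 1 * (b 1 * (γ 0 ^ 2 + γ 1 ^ 2) + b 2 * γ 2 ^ 2 - b 1 * b 2 / (2 * d))) ],
    ![ -(g * γ 2 * (b 0 * γ 0 ^ 2 + b 2 * (γ 1 ^ 2 + γ 2 ^ 2) - b 0 * b 2 / (2 * d))),
       g * (b 2 - b 0) * γ 0 * γ 1 * γ 2,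
       g * γ 0 * (b 0 * (γ 0 ^ 2 + γ 1 ^ 2) + b 2 * γ 2 ^ 2 - b 0 * b 2 / (2 * d)) ],
    ![ g * γ 1 * (b 0 * γ 0 ^ 2 + b 1 * (γ 1 ^ 2 + γ 2 ^ 2) - b 0 * b 1 / (2 * d)),
       -(g * γ 0 * (b 0 * (γ 0 ^ 2 + γ 2 ^ 2) + b 1 * γ 1 ^ 2 - b 0 * b 1 / (2 * d))),
       g * (b 0 - b 1) * γ 0 * γ 1 * γ 2 ]]

/-- The component f_k with {M_i, M_j}_b = Σ_k ε_ijk f_k. -/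
def fmm (a : R3) (d : ℝ) (x : St) (k : Fin 3) : ℝ :=
  let g := gfun a d x.1
  let b := bb a
  g * (-(alf a x k) * x.1 k + dot3 x.1 x.1 * b k * x.2 k - (b k) ^ 2 * x.2 k / (2 * d))
  - g⁻¹ * x.1 k * (2 * d * dot3 x.1 x.1 - (b 0 + b 1 + b 2)) *
    ( alf a x k * b k / (∏ m ∈ Finset.univ.filter (fun m => m ≠ k), (b k + b m))
      + (∏ m ∈ Finset.univ.filter (fun m => m ≠ k), (b k - b m)) * b k * x.1 k * x.2 k /
          ((b 0 + b 1) * (b 1 + b 2) * (b 0 + b 2)) )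

/-- Structure matrix of the κ = -1 bracket {·,·}_b. -/
def piB (a : R3) (d : ℝ) (x : St) : (Fin 3 ⊕ Fin 3) → (Fin 3 ⊕ Fin 3) → ℝ
  | .inl _, .inl _ => 0
  | .inl i, .inr j => -(pmg a d x.1 j i)
  | .inr i, .inl j => pmg a d x.1 i j
  | .inr i, .inr j => ∑ k, eps i j k * fmm a d x k

/-!
The gradient of `C₁` is `(2γ, 0)` and that of `C₂` is `(BM, Bγ)`, so every bracket with a
coordinate function is a contraction of the structure matrix. For the table `P` of
`{M_i, γ_j}_b` the identities `Pγ = 0` and `Pᵀ(Bγ) = 0` are polynomial, and `{C₂, M_j}_b = 0`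
amounts to `Bγ × f = -P(BM)`. The `g⁻¹`-part of `f` is a multiple of `Bγ`: its `k`-th
coefficient is `b_k Σ_m γ_m M_m / (b_{m+1} + b_{m+2})` (indices mod 3). So it drops out of the
cross product, and what remains is a polynomial identity in `g`, `1/d`, `b`, `γ`, `M`.
-/

open scoped Matrix

lemma cross_eq_crossProduct (v w : R3) : cross v w = v ⨯₃ w := by
  rw [cross_apply]; rfl

lemma sum_sum_eps_mul (v w : R3) (j : Fin 3) :
    ∑ i, ∑ k, eps i j k * (v i * w k) = -cross v w j := by
  fin_cases j <;> simp [Fin.sum_univ_three, eps, cross] <;> ring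

lemma hasFDerivAt_fst_apply (m : Fin 3) (x : St) :
    HasFDerivAt (fun y : St => y.1 m)
      ((ContinuousLinearMap.proj m).comp (ContinuousLinearMap.fst ℝ R3 R3)) x :=
  ((ContinuousLinearMap.proj m).comp (ContinuousLinearMap.fst ℝ R3 R3)).hasFDerivAt

lemma hasFDerivAt_snd_apply (m : Fin 3) (x : St) :
    HasFDerivAt (fun y : St => y.2 m)
      ((ContinuousLinearMap.proj m).comp (ContinuousLinearMap.snd ℝ R3 R3)) x :=
  ((ContinuousLinearMap.proj m).comp (ContinuousLinearMap.snd ℝ R3 R3)).hasFDerivAt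

lemma pd_coordFn (u v : Fin 3 ⊕ Fin 3) (x : St) :
    pd u (coordFn v) x = if u = v then 1 else 0 := by
  rcases u with i | i <;> rcases v with j | j <;> simp only [pd, coordFn] <;>
    first
    | rw [(hasFDerivAt_fst_apply j x).fderiv]
    | rw [(hasFDerivAt_snd_apply j x).fderiv]
  all_goals simp [Pi.single_apply, eq_comm]

lemma pb_coordFn (π : St → (Fin 3 ⊕ Fin 3) → (Fin 3 ⊕ Fin 3) → ℝ) (F : St → ℝ)
    (u : Fin 3 ⊕ Fin 3) (x : St) :
    pb π F (coordFn u) x = ∑ v, π x v u * pd v F x :=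
  Finset.sum_congr rfl fun v _ => by simp [pd_coordFn]

lemma hasFDerivAt_dot3_self (x : St) :
    HasFDerivAt (fun y : St => dot3 y.1 y.1)
      (∑ m, (x.1 m • (ContinuousLinearMap.proj m).comp (ContinuousLinearMap.fst ℝ R3 R3) +
        x.1 m • (ContinuousLinearMap.proj m).comp (ContinuousLinearMap.fst ℝ R3 R3))) x :=
  HasFDerivAt.fun_sum fun m _ => (hasFDerivAt_fst_apply m x).mul (hasFDerivAt_fst_apply m x)

lemma hasFDerivAt_sum_mul_mul (c : R3) (x : St) :
    HasFDerivAt (fun y : St => ∑ m, y.1 m * c m * y.2 m)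
      (∑ m, ((x.1 m * c m) • (ContinuousLinearMap.proj m).comp (ContinuousLinearMap.snd ℝ R3 R3) +
        x.2 m • c m • (ContinuousLinearMap.proj m).comp (ContinuousLinearMap.fst ℝ R3 R3))) x :=
  HasFDerivAt.fun_sum fun m _ =>
    ((hasFDerivAt_fst_apply m x).mul_const (c m)).mul (hasFDerivAt_snd_apply m x)

lemma pd_inl_dot3_self (i : Fin 3) (x : St) :
    pd (.inl i) (fun y : St => dot3 y.1 y.1) x = 2 * x.1 i := by
  simp [pd, (hasFDerivAt_dot3_self x).fderiv, Pi.single_apply, Finset.sum_add_distrib]; ring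

lemma pd_inr_dot3_self (i : Fin 3) (x : St) :
    pd (.inr i) (fun y : St => dot3 y.1 y.1) x = 0 := by
  simp [pd, (hasFDerivAt_dot3_self x).fderiv]

lemma pd_inl_sum_mul_mul (c : R3) (i : Fin 3) (x : St) :
    pd (.inl i) (fun y : St => ∑ m, y.1 m * c m * y.2 m) x = c i * x.2 i := by
  simp [pd, (hasFDerivAt_sum_mul_mul c x).fderiv, Pi.single_apply]; ring

lemma pd_inr_sum_mul_mul (c : R3) (i : Fin 3) (x : St) :
    pd (.inr i) (fun y : St => ∑ m, y.1 m * c m * y.2 m) x = x.1 i * c i := by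
  simp [pd, (hasFDerivAt_sum_mul_mul c x).fderiv, Pi.single_apply]

lemma sum_pmg_mul_self (a : R3) (d : ℝ) (γ : R3) (j : Fin 3) :
    ∑ i, pmg a d γ j i * γ i = 0 := by
  fin_cases j <;> simp [Fin.sum_univ_three, pmg] <;> ring

lemma sum_pmg_mul_bb_mul (a : R3) (d : ℝ) (γ : R3) (j : Fin 3) :
    ∑ i, pmg a d γ i j * (γ i * bb a i) = 0 := by
  fin_cases j <;> simp [Fin.sum_univ_three, pmg] <;> ring

/-- The coefficient of `g` in `fmm`. -/
def fmmPoly (a : R3) (d : ℝ) (x : St) : R3 := fun k =>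
  -(alf a x k) * x.1 k + dot3 x.1 x.1 * bb a k * x.2 k - bb a k ^ 2 * x.2 k / (2 * d)

lemma alf_mul_bb_div_add_eq (a : R3) (hb : ∀ i j : Fin 3, bb a i + bb a j ≠ 0) (x : St)
    (k : Fin 3) :
    alf a x k * bb a k / (∏ m ∈ Finset.univ.filter (fun m => m ≠ k), (bb a k + bb a m))
      + (∏ m ∈ Finset.univ.filter (fun m => m ≠ k), (bb a k - bb a m)) * bb a k * x.1 k * x.2 k /
          ((bb a 0 + bb a 1) * (bb a 1 + bb a 2) * (bb a 0 + bb a 2))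
      = bb a k * ∑ m, x.1 m * x.2 m / (bb a (m + 1) + bb a (m + 2)) := by
  fin_cases k <;>
    simp [alf, dot3, Finset.prod_filter, Fin.prod_univ_three, Fin.sum_univ_three] <;>
    field_simp [hb] <;> ring

lemma fmm_eq (a : R3) (d : ℝ) (hb : ∀ i j : Fin 3, bb a i + bb a j ≠ 0) (x : St) :
    fmm a d x = gfun a d x.1 • fmmPoly a d x -
      ((gfun a d x.1)⁻¹ * (2 * d * dot3 x.1 x.1 - (bb a 0 + bb a 1 + bb a 2)) *
        ∑ m, x.1 m * x.2 m / (bb a (m + 1) + bb a (m + 2))) • fun k => bb a k * x.1 k := by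
  ext k
  simp only [fmm, alf_mul_bb_div_add_eq a hb x k, fmmPoly, Pi.sub_apply, Pi.smul_apply,
    smul_eq_mul]
  ring

lemma cross_bb_mul_fmm (a : R3) (d : ℝ) (hb : ∀ i j : Fin 3, bb a i + bb a j ≠ 0) (x : St) :
    cross (fun k => bb a k * x.1 k) (fmm a d x) =
      gfun a d x.1 • cross (fun k => bb a k * x.1 k) (fmmPoly a d x) := by
  rw [fmm_eq a d hb x, cross_eq_crossProduct, cross_eq_crossProduct, map_sub, map_smul, map_smul,
    cross_self, smul_zero, sub_zero]

lemma gfun_mul_cross_bb_mul_fmmPoly (a : R3) (d : ℝ) (x : St) (j : Fin 3) :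
    gfun a d x.1 * cross (fun k => bb a k * x.1 k) (fmmPoly a d x) j =
      -∑ i, pmg a d x.1 j i * (bb a i * x.2 i) := by
  fin_cases j <;> simp [cross, fmmPoly, pmg, alf, dot3, Fin.sum_univ_three] <;> ring

lemma pb_dot3_self_coordFn (a : R3) (d : ℝ) (x : St) (u : Fin 3 ⊕ Fin 3) :
    pb (piB a d) (fun y => dot3 y.1 y.1) (coordFn u) x = 0 := by
  rw [pb_coordFn, Fintype.sum_sum_type]
  rcases u with j | j
  · simp [piB, pd_inr_dot3_self]
  · simp only [piB, pd_inl_dot3_self, pd_inr_dot3_self, mul_zero, Finset.sum_const_zero, add_zero]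
    calc ∑ i, -pmg a d x.1 j i * (2 * x.1 i) = -2 * ∑ i, pmg a d x.1 j i * x.1 i := by
          rw [Finset.mul_sum]; exact Finset.sum_congr rfl fun i _ => by ring
      _ = 0 := by rw [sum_pmg_mul_self, mul_zero]

lemma pb_sum_mul_bb_mul_coordFn (a : R3) (d : ℝ) (hb : ∀ i j : Fin 3, bb a i + bb a j ≠ 0)
    (x : St) (u : Fin 3 ⊕ Fin 3) :
    pb (piB a d) (fun y => ∑ m, y.1 m * bb a m * y.2 m) (coordFn u) x = 0 := by
  rw [pb_coordFn, Fintype.sum_sum_type]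
  rcases u with j | j
  · simp only [piB, pd_inr_sum_mul_mul, zero_mul, Finset.sum_const_zero, zero_add]
    exact sum_pmg_mul_bb_mul a d x.1 j
  · simp only [piB, pd_inl_sum_mul_mul, pd_inr_sum_mul_mul]
    have hε : ∑ i, (∑ k, eps i j k * fmm a d x k) * (x.1 i * bb a i) =
        ∑ i, ∑ k, eps i j k * (bb a i * x.1 i * fmm a d x k) :=
      Finset.sum_congr rfl fun i _ => by
        rw [Finset.sum_mul]; exact Finset.sum_congr rfl fun k _ => by ring
    rw [hε, sum_sum_eps_mul, cross_bb_mul_fmm a d hb, Pi.smul_apply, smul_eq_mul,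
      gfun_mul_cross_bb_mul_fmmPoly]
    simp

theorem casimirs_b_bracket_general
    (a : R3) (d : ℝ)
    (hb : ∀ i j : Fin 3, bb a i + bb a j ≠ 0)
    (x : St) :
    ∀ u : Fin 3 ⊕ Fin 3,
      pb (piB a d) (fun y => dot3 y.1 y.1) (coordFn u) x = 0 ∧
      pb (piB a d) (fun y => ∑ m, y.1 m * bb a m * y.2 m) (coordFn u) x = 0 :=
  fun u => ⟨pb_dot3_self_coordFn a d x u, pb_sum_mul_bb_mul_coordFn a d hb x u⟩

/-- C1 = (γ,γ) and C2 = (γ, B M) are Casimir functions of {·,·}_b. -/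
theorem casimirs_b_bracket
    (a : R3) (d : ℝ) (hd : 0 < d) (ha : ∀ i, a i ≠ 0)
    (hb : ∀ i j : Fin 3, bb a i + bb a j ≠ 0)
    (x : St) (hx : 0 < 1 - d * dot3 x.1 (Aapp a x.1)) :
    ∀ u : Fin 3 ⊕ Fin 3,
      pb (piB a d) (fun y => dot3 y.1 y.1) (coordFn u) x = 0 ∧
      pb (piB a d) (fun y => ∑ m, y.1 m * bb a m * y.2 m) (coordFn u) x = 0 :=
  casimirs_b_bracket_general a d hb x
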